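/- Let Δ ∈ ℝ^{n×n×L} be any 3-way tensor, let δ ∈ (0,1], let U be an n×r matrix with orthonormal columns (UᵀU = I_r) each of whose rows has Euclidean norm at most δ, and let G be any L×m matrix. Then the tensor spectral norm of Δ ×₂ Uᵀ ×₃ Gᵀ ∈ ℝ^{n×r×m} satisfies ‖Δ ×₂ Uᵀ ×₃ Gᵀ‖ ≤ ‖G‖ · ‖Δ‖_{2,δ}, where ‖G‖ is the matrix operator (spectral) norm. -/

import Mathlib

/-- The spectral norm of a 3-way tensor. -/
noncomputable def tensorNorm {n₁ n₂ n₃ : ℕ} (T : Fin n₁ → Fin n₂ → Fin n₃ → ℝ) : ℝ :=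
  sSup {x | ∃ (u₁ : Fin n₁ → ℝ) (u₂ : Fin n₂ → ℝ) (u₃ : Fin n₃ → ℝ),
    (∑ i, (u₁ i) ^ 2 ≤ 1) ∧ (∑ i, (u₂ i) ^ 2 ≤ 1) ∧ (∑ i, (u₃ i) ^ 2 ≤ 1) ∧
    x = ∑ i₁, ∑ i₂, ∑ i₃, T i₁ i₂ i₃ * u₁ i₁ * u₂ i₂ * u₃ i₃}

/-- The mode-2 tensor incoherent norm `‖T‖_{2,δ}`. -/
noncomputable def incohNorm2 {n₁ n₂ n₃ : ℕ} (δ : ℝ)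
    (T : Fin n₁ → Fin n₂ → Fin n₃ → ℝ) : ℝ :=
  sSup {x | ∃ (u₁ : Fin n₁ → ℝ) (u₂ : Fin n₂ → ℝ) (u₃ : Fin n₃ → ℝ),
    (∑ i, (u₁ i) ^ 2 ≤ 1) ∧ (∑ i, (u₂ i) ^ 2 ≤ 1) ∧ (∑ i, (u₃ i) ^ 2 ≤ 1) ∧
    (∀ i, |u₂ i| ≤ δ) ∧
    x = ∑ i₁, ∑ i₂, ∑ i₃, T i₁ i₂ i₃ * u₁ i₁ * u₂ i₂ * u₃ i₃}

/-- The matrix operator (spectral) norm, expressed as a bilinear supremum. -/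
noncomputable def matOpNorm {p q : ℕ} (M : Matrix (Fin p) (Fin q) ℝ) : ℝ :=
  sSup {x | ∃ (u : Fin p → ℝ) (v : Fin q → ℝ),
    (∑ a, (u a) ^ 2 ≤ 1) ∧ (∑ b, (v b) ^ 2 ≤ 1) ∧
    x = ∑ a, ∑ b, u a * M a b * v b}

/-! The trilinear form of `Δ ×₂ Uᵀ ×₃ Gᵀ` at `(u₁, u₂, u₃)` is the trilinear form of `Δ` at
`(u₁, U u₂, G u₃)`. Since `U` is an isometry, `U u₂` lies in the unit ball, and by Cauchy–Schwarz
against the rows of `U` its entries are at most `δ`, so it is admissible for `‖Δ‖_{2,δ}`.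
Homogeneity in the third slot bounds the form by `‖Δ‖_{2,δ} ‖G u₃‖ ≤ ‖Δ‖_{2,δ} ‖G‖`. -/

open Finset Matrix

def trilinearForm {ι₁ ι₂ ι₃ : Type*} [Fintype ι₁] [Fintype ι₂] [Fintype ι₃]
    (T : ι₁ → ι₂ → ι₃ → ℝ) (u₁ : ι₁ → ℝ) (u₂ : ι₂ → ℝ) (u₃ : ι₃ → ℝ) : ℝ :=
  ∑ i₁, ∑ i₂, ∑ i₃, T i₁ i₂ i₃ * u₁ i₁ * u₂ i₂ * u₃ i₃

section SumSq

variable {ι : Type*} [Fintype ι]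

lemma abs_le_one_of_sum_sq_le_one {u : ι → ℝ} (hu : ∑ i, u i ^ 2 ≤ 1) (i : ι) : |u i| ≤ 1 :=
  sq_le_one_iff_abs_le_one _ |>.mp <|
    (single_le_sum (fun j _ => sq_nonneg (u j)) (mem_univ i)).trans hu

lemma le_mul_sqrt_sum_sq_of_homogeneous (f : (ι → ℝ) → ℝ) (hf : ∀ (c : ℝ) u, f (c • u) = c * f u)
    {S : ℝ} (hS : ∀ u, ∑ i, u i ^ 2 ≤ 1 → f u ≤ S) (u : ι → ℝ) :
    f u ≤ S * √(∑ i, u i ^ 2) := by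
  rcases (Real.sqrt_nonneg (∑ i, u i ^ 2)).eq_or_lt with hs | hs
  · have hu : u = 0 := dotProduct_self_eq_zero.mp <| by
      simpa only [dotProduct, ← sq] using
        (Real.sqrt_eq_zero (sum_nonneg fun j _ => sq_nonneg (u j))).mp hs.symm
    rw [← hs, mul_zero, hu, ← zero_smul ℝ (0 : ι → ℝ), hf, zero_mul]
  · set s := √(∑ i, u i ^ 2) with hs_def
    have hunit : ∑ i, (s⁻¹ • u) i ^ 2 ≤ 1 := by
      simp only [Pi.smul_apply, smul_eq_mul, mul_pow, ← mul_sum]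
      rw [← Real.sq_sqrt (sum_nonneg fun j _ => sq_nonneg (u j)), ← hs_def, inv_pow,
        inv_mul_cancel₀ (pow_ne_zero 2 hs.ne')]
    calc f u = s * f (s⁻¹ • u) := by rw [hf, ← mul_assoc, mul_inv_cancel₀ hs.ne', one_mul]
      _ ≤ s * S := mul_le_mul_of_nonneg_left (hS _ hunit) hs.le
      _ = S * s := mul_comm _ _

end SumSq

section Matrix

variable {m n : Type*} [Fintype n]

lemma sum_sq_mulVec_of_transpose_mul_self [Fintype m] [DecidableEq n] {U : Matrix m n ℝ}
    (hU : Uᵀ * U = 1) (x : n → ℝ) :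
    ∑ i, (U *ᵥ x) i ^ 2 = ∑ a, x a ^ 2 := by
  simp only [sq]
  change (U *ᵥ x) ⬝ᵥ (U *ᵥ x) = x ⬝ᵥ x
  rw [dotProduct_comm, dotProduct_mulVec, ← mulVec_transpose, mulVec_mulVec, hU, one_mulVec]

lemma abs_mulVec_le (U : Matrix m n ℝ) (x : n → ℝ) (i : m) :
    |(U *ᵥ x) i| ≤ √(∑ a, U i a ^ 2) * √(∑ a, x a ^ 2) := by
  rw [← Real.sqrt_mul (sum_nonneg fun a _ => sq_nonneg (U i a))]
  exact Real.abs_le_sqrt (sum_mul_sq_le_sq_mul_sq _ _ _)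

end Matrix

lemma sum_sum_sum_sum_comm {α β γ δ : Type*} [Fintype α] [Fintype β] [Fintype γ] [Fintype δ]
    (f : α → β → γ → δ → ℝ) :
    ∑ a, ∑ b, ∑ c, ∑ d, f a b c d = ∑ c, ∑ d, ∑ a, ∑ b, f a b c d := by
  calc ∑ a, ∑ b, ∑ c, ∑ d, f a b c d = ∑ p : α × β, ∑ q : γ × δ, f p.1 p.2 q.1 q.2 := by
        simp only [Fintype.sum_prod_type]
    _ = ∑ q : γ × δ, ∑ p : α × β, f p.1 p.2 q.1 q.2 := sum_comm
    _ = ∑ c, ∑ d, ∑ a, ∑ b, f a b c d := by simp only [Fintype.sum_prod_type]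

section Tensor

variable {ι₁ ι₂ ι₃ : Type*} [Fintype ι₁] [Fintype ι₂] [Fintype ι₃]

lemma trilinearForm_smul_right (T : ι₁ → ι₂ → ι₃ → ℝ) (u₁ : ι₁ → ℝ) (u₂ : ι₂ → ℝ) (c : ℝ)
    (u₃ : ι₃ → ℝ) : trilinearForm T u₁ u₂ (c • u₃) = c * trilinearForm T u₁ u₂ u₃ := by
  simp only [trilinearForm, Pi.smul_apply, smul_eq_mul, mul_sum]
  exact sum_congr rfl fun _ _ => sum_congr rfl fun _ _ => sum_congr rfl fun _ _ => by ring

lemma trilinearForm_mulVec {κ₂ κ₃ : Type*} [Fintype κ₂] [Fintype κ₃] (T : ι₁ → ι₂ → ι₃ → ℝ)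
    (U : Matrix ι₂ κ₂ ℝ) (G : Matrix ι₃ κ₃ ℝ) (u₁ : ι₁ → ℝ) (u₂ : κ₂ → ℝ) (u₃ : κ₃ → ℝ) :
    trilinearForm (fun i₁ a b => ∑ i₂, ∑ i₃, T i₁ i₂ i₃ * U i₂ a * G i₃ b) u₁ u₂ u₃ =
      trilinearForm T u₁ (U *ᵥ u₂) (G *ᵥ u₃) := by
  simp only [trilinearForm, mulVec, dotProduct, sum_mul, mul_sum]
  refine sum_congr rfl fun i₁ _ => ?_
  rw [sum_sum_sum_sum_comm]
  refine sum_congr rfl fun i₂ _ => sum_congr rfl fun i₃ _ => ?_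
  rw [sum_comm]
  exact sum_congr rfl fun _ _ => sum_congr rfl fun _ _ => by ring

lemma trilinearForm_le_sum_abs (T : ι₁ → ι₂ → ι₃ → ℝ) {u₁ : ι₁ → ℝ} {u₂ : ι₂ → ℝ}
    {u₃ : ι₃ → ℝ} (h₁ : ∑ i, u₁ i ^ 2 ≤ 1) (h₂ : ∑ i, u₂ i ^ 2 ≤ 1) (h₃ : ∑ i, u₃ i ^ 2 ≤ 1) :
    trilinearForm T u₁ u₂ u₃ ≤ ∑ i₁, ∑ i₂, ∑ i₃, |T i₁ i₂ i₃| := by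
  refine sum_le_sum fun i₁ _ => sum_le_sum fun i₂ _ => sum_le_sum fun i₃ _ => ?_
  have h₁' := abs_le_one_of_sum_sq_le_one h₁ i₁
  have h₂' := abs_le_one_of_sum_sq_le_one h₂ i₂
  have h₃' := abs_le_one_of_sum_sq_le_one h₃ i₃
  calc T i₁ i₂ i₃ * u₁ i₁ * u₂ i₂ * u₃ i₃ ≤ |T i₁ i₂ i₃| * |u₁ i₁| * |u₂ i₂| * |u₃ i₃| := by
        simpa only [abs_mul] using le_abs_self (T i₁ i₂ i₃ * u₁ i₁ * u₂ i₂ * u₃ i₃)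
    _ ≤ |T i₁ i₂ i₃| * 1 * 1 * 1 := by gcongr
    _ = |T i₁ i₂ i₃| := by ring

end Tensor

section Norms

variable {n₁ n₂ n₃ : ℕ}

lemma tensorNorm_le {T : Fin n₁ → Fin n₂ → Fin n₃ → ℝ} {C : ℝ}
    (h : ∀ u₁ u₂ u₃, ∑ i, u₁ i ^ 2 ≤ 1 → ∑ i, u₂ i ^ 2 ≤ 1 → ∑ i, u₃ i ^ 2 ≤ 1 →
      trilinearForm T u₁ u₂ u₃ ≤ C) :
    tensorNorm T ≤ C :=
  csSup_le ⟨_, 0, 0, 0, by simp, by simp, by simp, rfl⟩ <| by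
    rintro _ ⟨u₁, u₂, u₃, h₁, h₂, h₃, rfl⟩
    exact h u₁ u₂ u₃ h₁ h₂ h₃

lemma trilinearForm_le_incohNorm2 {δ : ℝ} (T : Fin n₁ → Fin n₂ → Fin n₃ → ℝ)
    {u₁ : Fin n₁ → ℝ} {u₂ : Fin n₂ → ℝ} {u₃ : Fin n₃ → ℝ} (h₁ : ∑ i, u₁ i ^ 2 ≤ 1)
    (h₂ : ∑ i, u₂ i ^ 2 ≤ 1) (h₃ : ∑ i, u₃ i ^ 2 ≤ 1) (hδ : ∀ i, |u₂ i| ≤ δ) :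
    trilinearForm T u₁ u₂ u₃ ≤ incohNorm2 δ T := by
  refine le_csSup ⟨∑ i₁, ∑ i₂, ∑ i₃, |T i₁ i₂ i₃|, ?_⟩ ⟨u₁, u₂, u₃, h₁, h₂, h₃, hδ, rfl⟩
  rintro _ ⟨v₁, v₂, v₃, hv₁, hv₂, hv₃, -, rfl⟩
  exact trilinearForm_le_sum_abs T hv₁ hv₂ hv₃

lemma sum_sum_mul_mul_le_sum_abs {α β : Type*} [Fintype α] [Fintype β] (M : α → β → ℝ)
    {u : α → ℝ} {v : β → ℝ} (hu : ∑ a, u a ^ 2 ≤ 1) (hv : ∑ b, v b ^ 2 ≤ 1) :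
    ∑ a, ∑ b, u a * M a b * v b ≤ ∑ a, ∑ b, |M a b| := by
  refine sum_le_sum fun a _ => sum_le_sum fun b _ => ?_
  have hu' := abs_le_one_of_sum_sq_le_one hu a
  have hv' := abs_le_one_of_sum_sq_le_one hv b
  calc u a * M a b * v b ≤ |M a b| * |u a| * |v b| := by
        simpa only [abs_mul, mul_comm |u a|] using le_abs_self (u a * M a b * v b)
    _ ≤ |M a b| * 1 * 1 := by gcongr
    _ = |M a b| := by ring

lemma dotProduct_mulVec_le_matOpNorm {p q : ℕ} (M : Matrix (Fin p) (Fin q) ℝ)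
    {u : Fin p → ℝ} {v : Fin q → ℝ} (hu : ∑ a, u a ^ 2 ≤ 1) (hv : ∑ b, v b ^ 2 ≤ 1) :
    u ⬝ᵥ (M *ᵥ v) ≤ matOpNorm M := by
  have hform : u ⬝ᵥ (M *ᵥ v) = ∑ a, ∑ b, u a * M a b * v b := by
    simp only [dotProduct, mulVec, mul_sum, mul_assoc]
  rw [hform]
  refine le_csSup ⟨∑ a, ∑ b, |M a b|, ?_⟩ ⟨u, v, hu, hv, rfl⟩
  rintro _ ⟨u', v', hu', hv', rfl⟩
  exact sum_sum_mul_mul_le_sum_abs M hu' hv'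

lemma matOpNorm_nonneg {p q : ℕ} (M : Matrix (Fin p) (Fin q) ℝ) : 0 ≤ matOpNorm M := by
  simpa using dotProduct_mulVec_le_matOpNorm M (u := 0) (v := 0) (by simp) (by simp)

lemma sqrt_sum_sq_mulVec_le_matOpNorm {p q : ℕ} (M : Matrix (Fin p) (Fin q) ℝ) {v : Fin q → ℝ}
    (hv : ∑ b, v b ^ 2 ≤ 1) : √(∑ a, (M *ᵥ v) a ^ 2) ≤ matOpNorm M := by
  set w := M *ᵥ v
  have hww : w ⬝ᵥ w = √(∑ a, w a ^ 2) * √(∑ a, w a ^ 2) := by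
    rw [Real.mul_self_sqrt (sum_nonneg fun a _ => sq_nonneg (w a))]
    simp only [dotProduct, sq]
  have key : w ⬝ᵥ w ≤ matOpNorm M * √(∑ a, w a ^ 2) :=
    le_mul_sqrt_sum_sq_of_homogeneous (fun u => u ⬝ᵥ w) (fun c u => smul_dotProduct c u w)
      (fun u hu => dotProduct_mulVec_le_matOpNorm M hu hv) w
  rw [hww] at key
  rcases (Real.sqrt_nonneg (∑ a, w a ^ 2)).eq_or_lt with hs | hs
  · rw [← hs]
    exact matOpNorm_nonneg M
  · exact le_of_mul_le_mul_right key hs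

end Norms

theorem mode_product_incoherent_norm_bound_general
    (n L r m : ℕ) (Δ : Fin n → Fin n → Fin L → ℝ)
    (δ : ℝ)
    (U : Matrix (Fin n) (Fin r) ℝ) (hU : U.transpose * U = 1)
    (hUrow : ∀ i, Real.sqrt (∑ a, (U i a) ^ 2) ≤ δ)
    (G : Matrix (Fin L) (Fin m) ℝ) :
    tensorNorm (fun i₁ a b => ∑ i₂, ∑ i₃, Δ i₁ i₂ i₃ * U i₂ a * G i₃ b)
      ≤ matOpNorm G * incohNorm2 δ Δ := by
  refine tensorNorm_le fun u₁ u₂ u₃ h₁ h₂ h₃ => ?_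
  rw [trilinearForm_mulVec]
  have hv : ∑ i, (U *ᵥ u₂) i ^ 2 ≤ 1 := (sum_sq_mulVec_of_transpose_mul_self hU u₂).trans_le h₂
  have hvδ : ∀ i, |(U *ᵥ u₂) i| ≤ δ := fun i =>
    calc |(U *ᵥ u₂) i| ≤ √(∑ a, U i a ^ 2) * √(∑ a, u₂ a ^ 2) := abs_mulVec_le U u₂ i
      _ ≤ √(∑ a, U i a ^ 2) := mul_le_of_le_one_right (Real.sqrt_nonneg _)
          (Real.sqrt_le_one.mpr h₂)
      _ ≤ δ := hUrow i
  have hincoh : 0 ≤ incohNorm2 δ Δ := by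
    simpa [trilinearForm] using
      trilinearForm_le_incohNorm2 Δ h₁ hv (u₃ := 0) (by simp) hvδ
  calc trilinearForm Δ u₁ (U *ᵥ u₂) (G *ᵥ u₃)
      ≤ incohNorm2 δ Δ * √(∑ b, (G *ᵥ u₃) b ^ 2) :=
        le_mul_sqrt_sum_sq_of_homogeneous _ (trilinearForm_smul_right Δ u₁ _)
          (fun w hw => trilinearForm_le_incohNorm2 Δ h₁ hv hw hvδ) _
    _ ≤ incohNorm2 δ Δ * matOpNorm G :=
        mul_le_mul_of_nonneg_left (sqrt_sum_sq_mulVec_le_matOpNorm G h₃) hincoh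
    _ = matOpNorm G * incohNorm2 δ Δ := mul_comm _ _

/-- **Mode-product bound via the tensor incoherent norm** (used in the proof of
Theorem 1 of the paper): if `U` has orthonormal columns with rows of Euclidean norm at
most `δ` and `G` is arbitrary, then `‖Δ ×₂ Uᵀ ×₃ Gᵀ‖ ≤ ‖G‖ · ‖Δ‖_{2,δ}`. -/
theorem mode_product_incoherent_norm_bound
    (n L r m : ℕ) (Δ : Fin n → Fin n → Fin L → ℝ)
    (δ : ℝ) (hδ : δ ∈ Set.Ioc (0 : ℝ) 1)
    (U : Matrix (Fin n) (Fin r) ℝ) (hU : U.transpose * U = 1)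
    (hUrow : ∀ i, Real.sqrt (∑ a, (U i a) ^ 2) ≤ δ)
    (G : Matrix (Fin L) (Fin m) ℝ) :
    tensorNorm (fun i₁ a b => ∑ i₂, ∑ i₃, Δ i₁ i₂ i₃ * U i₂ a * G i₃ b)
      ≤ matOpNorm G * incohNorm2 δ Δ :=
  mode_product_incoherent_norm_bound_general n L r m Δ δ U hU hUrow G
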